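/- (Pointwise form of Lemma 2.3.) Let I ∈ M_n(ℂ) be a unitary matrix, let f : 𝕋 → M_n(ℂ) admit a right canonical factorization datum (f₋, f₊), define g : 𝕋 → M_n(ℂ) by g(z) = I · f(z̄) · I*, and let (g₊, g₋) be any left canonical factorization datum for g. Then for every w in the closed unit disk 𝔻̄, g₊(w̄) · g₋(w) = I · (f₋(w̄) · f₊(w)) · I*. In other words, the exterior extension of g at the point 1/w equals I times the interior extension of f at w times I*, so that the canonical extensions intertwine the inversion symmetry I and the involution z ↦ z⁻¹ of the Riemann sphere. -/

import Mathlib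

open Complex Matrix

/-- The closed unit disk in `ℂ`. -/
def closedDisk : Set ℂ := {z : ℂ | ‖z‖ ≤ 1}

/-- The open unit disk in `ℂ`. -/
def openDisk : Set ℂ := {z : ℂ | ‖z‖ < 1}

/-- A right canonical factorization datum for `f : 𝕋 → Mₙ(ℂ)`: a pair `(fm, fp)` of maps on the
closed unit disk, continuous there, holomorphic on the open disk, taking invertible values, with
`f z = fm z̄ * fp z` on the unit circle. -/
structure RightCanonicalFactorizationDatum (n : ℕ)
    (f fm fp : ℂ → Matrix (Fin n) (Fin n) ℂ) : Prop where
  cont_m : ContinuousOn fm closedDisk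
  cont_p : ContinuousOn fp closedDisk
  hol_m : ∀ i j, DifferentiableOn ℂ (fun z => fm z i j) openDisk
  hol_p : ∀ i j, DifferentiableOn ℂ (fun z => fp z i j) openDisk
  unit_m : ∀ z ∈ closedDisk, IsUnit (fm z)
  unit_p : ∀ z ∈ closedDisk, IsUnit (fp z)
  factor : ∀ z : ℂ, ‖z‖ = 1 → f z = fm (starRingEnd ℂ z) * fp z

/-- A left canonical factorization datum for `f : 𝕋 → Mₙ(ℂ)`: a pair `(gp, gm)` of maps on the
closed unit disk, continuous there, holomorphic on the open disk, taking invertible values, with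
`f z = gp z * gm z̄` on the unit circle. -/
structure LeftCanonicalFactorizationDatum (n : ℕ)
    (f gp gm : ℂ → Matrix (Fin n) (Fin n) ℂ) : Prop where
  cont_p : ContinuousOn gp closedDisk
  cont_m : ContinuousOn gm closedDisk
  hol_p : ∀ i j, DifferentiableOn ℂ (fun z => gp z i j) openDisk
  hol_m : ∀ i j, DifferentiableOn ℂ (fun z => gm z i j) openDisk
  unit_p : ∀ z ∈ closedDisk, IsUnit (gp z)
  unit_m : ∀ z ∈ closedDisk, IsUnit (gm z)
  factor : ∀ z : ℂ, ‖z‖ = 1 → f z = gp z * gm (starRingEnd ℂ z)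

/-!
On the circle, `g z = I f(z̄) I*` and the two factorizations give
`gp z * gm z̄ = (I fm z) (fp z̄ I*)`, i.e. `A z = B z̄` for `A z = (I fm z)⁻¹ gp z` and
`B z = fp z I* (gm z)⁻¹`, both holomorphic in the disk and continuous up to the circle.
Such an identity propagates from the circle to the closed disk: with `ψ = conj ∘ B ∘ conj`
holomorphic, `A = conj ψ` on the circle means that `A - ψ` and `I (A + ψ)` have vanishing real
part there, and the maximum modulus principle applied to `exp (±h)` shows that a holomorphic `h`
whose real part vanishes on the circle has vanishing real part in the whole disk.
Evaluating `A w̄ = B w` gives the claim.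
-/

open ComplexConjugate

namespace Matrix

variable {ι R : Type*} [Fintype ι] [DecidableEq ι] [CommRing R]

theorem inv_mul_eq_mul_inv_iff {X P Y Q : Matrix ι ι R} (hX : IsUnit X) (hQ : IsUnit Q) :
    X⁻¹ * P = Y * Q⁻¹ ↔ P * Q = X * Y := by
  have := hX.invertible
  have := hQ.invertible
  rw [inv_mul_eq_iff_eq_mul_of_invertible, ← Matrix.mul_assoc, eq_comm,
    mul_inv_eq_iff_eq_mul_of_invertible, eq_comm]

end Matrix

namespace Subalgebra

variable {X R ι : Type*} [CommRing R] {S : Subalgebra R (X → R)}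

theorem fun_const_mem (C : Matrix ι ι R) (i j : ι) : (fun _ : X => C i j) ∈ S :=
  S.algebraMap_mem (C i j)

variable [Fintype ι] {M N : X → Matrix ι ι R}

theorem fun_det_mem [DecidableEq ι] (hM : ∀ i j, (fun x => M x i j) ∈ S) :
    (fun x => (M x).det) ∈ S := by
  -- lift `M` to a matrix over `S`; evaluation at `x` is a ring hom `S →+* R`, so it commutes with
  -- `det`
  let L : Matrix ι ι S := .of fun i j => ⟨_, hM i j⟩
  convert L.det.2 using 1
  funext x
  exact (((Pi.evalRingHom _ x).comp (S.val : S →+* (X → R))).map_det L).symm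

theorem fun_adjugate_mem [DecidableEq ι] (hM : ∀ i j, (fun x => M x i j) ∈ S) (i j : ι) :
    (fun x => (M x).adjugate i j) ∈ S := by
  let L : Matrix ι ι S := .of fun i j => ⟨_, hM i j⟩
  convert (L.adjugate i j).2 using 1
  funext x
  exact congrFun (congrFun
    (((Pi.evalRingHom _ x).comp (S.val : S →+* (X → R))).map_adjugate L).symm i) j

theorem fun_mul_mem (hM : ∀ i j, (fun x => M x i j) ∈ S) (hN : ∀ i j, (fun x => N x i j) ∈ S)
    (i j : ι) : (fun x => (M x * N x) i j) ∈ S := by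
  have h : (fun x => (M x * N x) i j) = ∑ k, (fun x => M x i k) * fun x => N x k j := by
    ext x; simp [Matrix.mul_apply]
  exact h ▸ S.sum_mem fun k _ => S.mul_mem (hM i k) (hN k j)

end Subalgebra

section DiffContOnCl

variable {E : Type*} [NormedAddCommGroup E] [NormedSpace ℂ E] {U : Set E}

def diffContOnClSubalgebra (U : Set E) : Subalgebra ℂ (E → ℂ) where
  carrier := {f | DiffContOnCl ℂ f U}
  mul_mem' hf hg := hf.smul hg
  add_mem' hf hg := hf.add hg
  algebraMap_mem' _ := diffContOnCl_const

theorem fun_inv_mem_diffContOnClSubalgebra {ι : Type*} [Fintype ι] [DecidableEq ι]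
    {M : E → Matrix ι ι ℂ} (hM : ∀ i j, (fun x => M x i j) ∈ diffContOnClSubalgebra U)
    (hu : ∀ x ∈ closure U, IsUnit (M x)) (i j : ι) :
    (fun x => (M x)⁻¹ i j) ∈ diffContOnClSubalgebra U := by
  have h : (fun x => (M x)⁻¹ i j) = (fun x => (M x).det)⁻¹ * fun x => (M x).adjugate i j := by
    ext x; simp [Matrix.inv_def, Ring.inverse_eq_inv']
  rw [h]
  refine Subalgebra.mul_mem _ ?_ (Subalgebra.fun_adjugate_mem hM i j)
  exact DiffContOnCl.inv (Subalgebra.fun_det_mem hM) fun x hx =>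
    ((isUnit_iff_isUnit_det _).1 (hu x hx)).ne_zero

theorem DiffContOnCl.re_eq_zero_of_frontier [Nontrivial E] {s : E → ℂ}
    (hU : Bornology.IsBounded U) (hs : DiffContOnCl ℂ s U)
    (hre : ∀ z ∈ frontier U, (s z).re = 0) {z : E} (hz : z ∈ closure U) : (s z).re = 0 := by
  have exp_re_le_one : ∀ t : E → ℂ, DiffContOnCl ℂ t U → (∀ z ∈ frontier U, (t z).re = 0) →
      Real.exp (t z).re ≤ 1 := fun t ht htre => by
    simpa [Complex.norm_exp] using norm_le_of_forall_mem_frontier_norm_le (C := 1) hU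
      (differentiable_exp.comp_diffContOnCl ht)
      (fun w hw => by simp [Complex.norm_exp, htre w hw]) hz
  have h₁ := exp_re_le_one s hs hre
  have h₂ := exp_re_le_one (-s) hs.neg fun w hw => by simp [hre w hw]
  simp only [Real.exp_le_one_iff, Pi.neg_apply, neg_re, neg_nonpos] at h₁ h₂
  linarith

end DiffContOnCl

theorem Complex.eq_conj_iff_re_sub_eq_zero_and_re_I_mul_add_eq_zero {u v : ℂ} :
    u = conj v ↔ (u - v).re = 0 ∧ (I * (u + v)).re = 0 := by
  simp only [Complex.ext_iff, conj_re, conj_im, sub_re, mul_re, I_re, I_im, add_re, add_im]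
  constructor <;> intro h <;> constructor <;> linarith [h.1, h.2]

section Reflection

variable {U : Set ℂ}

theorem DiffContOnCl.conj_conj {f : ℂ → ℂ} (hf : DiffContOnCl ℂ f U) (hU : IsOpen U)
    (hconj : Set.MapsTo conj U U) : DiffContOnCl ℂ (conj ∘ f ∘ conj) U := by
  refine ⟨fun z hz => ?_, ?_⟩
  · have := (hf.differentiableAt hU (hconj hz)).conj_conj
    rw [Complex.conj_conj] at this
    exact this.differentiableWithinAt
  · exact continuous_conj.comp_continuousOn
      (hf.continuousOn.comp continuous_conj.continuousOn (hconj.closure continuous_conj))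

theorem DiffContOnCl.eq_comp_conj_of_frontier {a b : ℂ → ℂ} (ha : DiffContOnCl ℂ a U)
    (hb : DiffContOnCl ℂ b U) (hU : IsOpen U) (hUb : Bornology.IsBounded U)
    (hconj : Set.MapsTo conj U U) (hab : ∀ z ∈ frontier U, a z = b (conj z))
    {z : ℂ} (hz : z ∈ closure U) : a z = b (conj z) := by
  set ψ := conj ∘ b ∘ conj
  have hψ : DiffContOnCl ℂ ψ U := hb.conj_conj hU hconj
  have hbψ : ∀ w, b (conj w) = conj (ψ w) := fun w => by simp [ψ]
  have hfr : ∀ w ∈ frontier U, (a w - ψ w).re = 0 ∧ (I * (a w + ψ w)).re = 0 := fun w hw =>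
    eq_conj_iff_re_sub_eq_zero_and_re_I_mul_add_eq_zero.1 (hbψ w ▸ hab w hw)
  have hIψ : DiffContOnCl ℂ (fun w => I * (a w + ψ w)) U :=
    (diffContOnCl_const (c := I)).smul (ha.add hψ)
  rw [hbψ, eq_conj_iff_re_sub_eq_zero_and_re_I_mul_add_eq_zero]
  exact ⟨(ha.sub hψ).re_eq_zero_of_frontier hUb (fun w hw => (hfr w hw).1) hz,
    hIψ.re_eq_zero_of_frontier hUb (fun w hw => (hfr w hw).2) hz⟩

theorem Matrix.eq_comp_conj_of_frontier {ι : Type*} {A B : ℂ → Matrix ι ι ℂ}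
    (hA : ∀ i j, (fun z => A z i j) ∈ diffContOnClSubalgebra U)
    (hB : ∀ i j, (fun z => B z i j) ∈ diffContOnClSubalgebra U) (hU : IsOpen U)
    (hUb : Bornology.IsBounded U) (hconj : Set.MapsTo conj U U)
    (hAB : ∀ z ∈ frontier U, A z = B (conj z)) {z : ℂ} (hz : z ∈ closure U) :
    A z = B (conj z) := by
  ext i j
  exact DiffContOnCl.eq_comp_conj_of_frontier (hA i j) (hB i j) hU hUb hconj
    (fun w hw => by rw [hAB w hw]) hz

end Reflection

theorem openDisk_eq_ball : openDisk = Metric.ball 0 1 := by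
  ext z; simp [openDisk]

theorem closure_openDisk : closure openDisk = closedDisk := by
  ext z; simp [openDisk_eq_ball, closure_ball, closedDisk]

theorem frontier_openDisk : frontier openDisk = {z | ‖z‖ = 1} := by
  ext z; simp [openDisk_eq_ball, frontier_ball]

theorem isOpen_openDisk : IsOpen openDisk :=
  openDisk_eq_ball ▸ Metric.isOpen_ball

theorem isBounded_openDisk : Bornology.IsBounded openDisk :=
  openDisk_eq_ball ▸ Metric.isBounded_ball

theorem mapsTo_conj_openDisk : Set.MapsTo conj openDisk openDisk := fun z hz => by
  simpa [openDisk] using hz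

theorem entry_mem_diffContOnClSubalgebra_openDisk {ι : Type*} {M : ℂ → Matrix ι ι ℂ}
    (hc : ContinuousOn M closedDisk)
    (hd : ∀ i j, DifferentiableOn ℂ (fun z => M z i j) openDisk)
    (i j : ι) : (fun z => M z i j) ∈ diffContOnClSubalgebra openDisk :=
  ⟨hd i j, closure_openDisk ▸ (continuous_id.matrix_elem i j).comp_continuousOn hc⟩

theorem RightCanonicalFactorizationDatum.entry_mem_m {n : ℕ}
    {f fm fp : ℂ → Matrix (Fin n) (Fin n) ℂ}
    (hf : RightCanonicalFactorizationDatum n f fm fp) (i j : Fin n) :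
    (fun z => fm z i j) ∈ diffContOnClSubalgebra openDisk :=
  entry_mem_diffContOnClSubalgebra_openDisk hf.cont_m hf.hol_m i j

theorem RightCanonicalFactorizationDatum.entry_mem_p {n : ℕ}
    {f fm fp : ℂ → Matrix (Fin n) (Fin n) ℂ}
    (hf : RightCanonicalFactorizationDatum n f fm fp) (i j : Fin n) :
    (fun z => fp z i j) ∈ diffContOnClSubalgebra openDisk :=
  entry_mem_diffContOnClSubalgebra_openDisk hf.cont_p hf.hol_p i j

theorem LeftCanonicalFactorizationDatum.entry_mem_p {n : ℕ}
    {g gp gm : ℂ → Matrix (Fin n) (Fin n) ℂ}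
    (hg : LeftCanonicalFactorizationDatum n g gp gm) (i j : Fin n) :
    (fun z => gp z i j) ∈ diffContOnClSubalgebra openDisk :=
  entry_mem_diffContOnClSubalgebra_openDisk hg.cont_p hg.hol_p i j

theorem LeftCanonicalFactorizationDatum.entry_mem_m {n : ℕ}
    {g gp gm : ℂ → Matrix (Fin n) (Fin n) ℂ}
    (hg : LeftCanonicalFactorizationDatum n g gp gm) (i j : Fin n) :
    (fun z => gm z i j) ∈ diffContOnClSubalgebra openDisk :=
  entry_mem_diffContOnClSubalgebra_openDisk hg.cont_m hg.hol_m i j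

theorem extensions_intertwine_inversion_symmetry_general
    {n : ℕ} (Iop : Matrix (Fin n) (Fin n) ℂ)
    (hI1 : Iop * Iopᴴ = 1)
    (f fm fp g gp gm : ℂ → Matrix (Fin n) (Fin n) ℂ)
    (hf : RightCanonicalFactorizationDatum n f fm fp)
    (hgdef : ∀ z : ℂ, ‖z‖ = 1 → g z = Iop * f (starRingEnd ℂ z) * Iopᴴ)
    (hg : LeftCanonicalFactorizationDatum n g gp gm) :
    ∀ w ∈ closedDisk,
      gp (starRingEnd ℂ w) * gm w = Iop * (fm (starRingEnd ℂ w) * fp w) * Iopᴴ := by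
  have hIop : IsUnit Iop := (isUnit_iff_isUnit_det _).2 (isUnit_det_of_right_inverse hI1)
  have hIfm : ∀ z ∈ closedDisk, IsUnit (Iop * fm z) := fun z hz => hIop.mul (hf.unit_m z hz)
  set A := fun z => (Iop * fm z)⁻¹ * gp z
  set B := fun z => fp z * Iopᴴ * (gm z)⁻¹
  have hA : ∀ i j, (fun z => A z i j) ∈ diffContOnClSubalgebra openDisk :=
    Subalgebra.fun_mul_mem (fun_inv_mem_diffContOnClSubalgebra
      (Subalgebra.fun_mul_mem (Subalgebra.fun_const_mem Iop) hf.entry_mem_m)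
      (closure_openDisk ▸ hIfm)) hg.entry_mem_p
  have hB : ∀ i j, (fun z => B z i j) ∈ diffContOnClSubalgebra openDisk :=
    Subalgebra.fun_mul_mem
      (Subalgebra.fun_mul_mem hf.entry_mem_p (Subalgebra.fun_const_mem Iopᴴ))
      (fun_inv_mem_diffContOnClSubalgebra hg.entry_mem_m (closure_openDisk ▸ hg.unit_m))
  have hAB : ∀ z ∈ frontier openDisk, A z = B (conj z) := fun z hz => by
    rw [frontier_openDisk] at hz
    have hz' : ‖conj z‖ = 1 := by simpa using hz
    rw [inv_mul_eq_mul_inv_iff (hIfm z hz.le) (hg.unit_m _ hz'.le), ← hg.factor z hz, hgdef z hz,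
      hf.factor _ hz', Complex.conj_conj]
    simp only [Matrix.mul_assoc]
  intro w hw
  have hw' : conj w ∈ closedDisk := by simpa [closedDisk] using hw
  have hAB_w := Matrix.eq_comp_conj_of_frontier hA hB isOpen_openDisk isBounded_openDisk
    mapsTo_conj_openDisk hAB (closure_openDisk ▸ hw')
  rw [Complex.conj_conj, inv_mul_eq_mul_inv_iff (hIfm _ hw') (hg.unit_m w hw)] at hAB_w
  simpa only [Matrix.mul_assoc] using hAB_w

/-- Pointwise form of Lemma 2.3: the canonical extensions intertwine the inversion symmetry `I`
and the involution `z ↦ z⁻¹` of the Riemann sphere.  If `g(z) = I f(z̄) I*` on the circle, then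
the exterior extension of `g` equals `I (interior extension of f) I*`. -/
theorem extensions_intertwine_inversion_symmetry
    {n : ℕ} (hn : 1 ≤ n) (Iop : Matrix (Fin n) (Fin n) ℂ)
    (hI1 : Iop * Iopᴴ = 1) (hI2 : Iopᴴ * Iop = 1)
    (f fm fp g gp gm : ℂ → Matrix (Fin n) (Fin n) ℂ)
    (hf : RightCanonicalFactorizationDatum n f fm fp)
    (hgdef : ∀ z : ℂ, ‖z‖ = 1 → g z = Iop * f (starRingEnd ℂ z) * Iopᴴ)
    (hg : LeftCanonicalFactorizationDatum n g gp gm) :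
    ∀ w ∈ closedDisk,
      gp (starRingEnd ℂ w) * gm w = Iop * (fm (starRingEnd ℂ w) * fp w) * Iopᴴ :=
  extensions_intertwine_inversion_symmetry_general Iop hI1 f fm fp g gp gm hf hgdef hg
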